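/- For a differentiated queue history h, there exists a data value x such that: Enq(x) does not happen-after any operation, Deq(x) exists and does not happen-after Enq(x), and Deq(x) does not happen-after any other Deq operation — only if h is linearizable with respect to the set of sequential words of the form Enq(x) · u1 · Deq(x) · u2 where u1 contains no Deq events. (Formally: the stated order constraints on x, combined with the interval-order happens-before of h, admit a linearization placing Enq(x) first and Deq(x) before all other dequeues.) -/

import Mathlib

attribute [local instance] Classical.propDecidable

/-- Operations of a queue history: enqueues and dequeues of data values
(natural numbers), and empty-dequeues (tagged by an identifier). -/
inductive QOp : Type
  | enq (d : ℕ)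
  | deq (d : ℕ)
  | deqEmpty (i : ℕ)
deriving DecidableEq

/-- A differentiated queue history: a finite set of operations (each operation
occurs at most once, so each data value is used at most once) together with a
happens-before relation that is a strict interval order. -/
structure QHistory where
  ops : Finset QOp
  hb : QOp → QOp → Prop
  hb_irrefl : ∀ o, ¬ hb o o
  hb_trans : ∀ a b c, hb a b → hb b c → hb a c
  interval : ∀ a b c d, hb a b → hb c d → hb a d ∨ hb c b

/-- `u` is a linearization of the history `h`: it enumerates exactly the
operations of `h` in an order extending happens-before. -/
def QHistory.Linearizes (h : QHistory) (u : List QOp) : Prop :=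
  u.Nodup ∧ (∀ o, o ∈ u ↔ o ∈ h.ops) ∧ u.Pairwise (fun a b => ¬ h.hb b a)

/-- `h` is linearizable with respect to the set of sequential words `M`. -/
def LinearizableSet (h : QHistory) (M : List QOp → Prop) : Prop :=
  ∃ u, M u ∧ h.Linearizes u

def noDeq (u : List QOp) : Prop := ∀ d, QOp.deq d ∉ u

def noUnmatchedEnq (u : List QOp) : Prop := ∀ d, QOp.enq d ∈ u → QOp.deq d ∈ u

/-- Matching set of the rule R_EnqDeq with witness `x`:
words `Enq(x) · u1 · Deq(x) · u2` where `u1` contains no dequeue. -/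
def MatchEnqDeqW (x : ℕ) (w : List QOp) : Prop :=
  ∃ u1 u2, w = QOp.enq x :: u1 ++ QOp.deq x :: u2 ∧ noDeq u1

/-- Matching set of R_EnqDeq (some witness). -/
def MatchEnqDeq (w : List QOp) : Prop := ∃ x, MatchEnqDeqW x w

/-- Data values occurring in a history. -/
def QHistory.dom (h : QHistory) : Set ℕ :=
  {d | QOp.enq d ∈ h.ops ∨ QOp.deq d ∈ h.ops}

def QOp.keep (D K : Set ℕ) : QOp → Prop
  | .enq d => d ∈ D
  | .deq d => d ∈ D
  | .deqEmpty i => i ∈ K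

/-- Projection of a history onto the data values in `D`, keeping the
empty-dequeue operations with identifiers in `K`. -/
noncomputable def QHistory.proj (h : QHistory) (D K : Set ℕ) : QHistory :=
  { h with ops := h.ops.filter (QOp.keep D K) }

/-- Remove all operations on the data value `x`. -/
noncomputable def QHistory.removeVal (h : QHistory) (x : ℕ) : QHistory :=
  { h with ops := h.ops.filter (fun o => o ≠ QOp.enq x ∧ o ≠ QOp.deq x) }

/-- Data values occurring in a sequential word. -/
def wordVals (u : List QOp) : Set ℕ := {d | QOp.enq d ∈ u ∨ QOp.deq d ∈ u}

/-!
Enq(x) happens-after nothing, so it can be put first. On the remaining operations, add to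
happens-before an edge from Deq(x) to every other dequeue and close transitively. Since Deq(x)
happens-after no other dequeue, this is still a strict order, and any linear extension of it
(Szpilrajn) lists Deq(x) before all other dequeues, i.e. no dequeue lies between Enq(x) and Deq(x).
-/

open Relation

theorem Finset.exists_nodup_pairwise_not_rel {α : Type*} (r : α → α → Prop) [IsStrictOrder α r]
    (s : Finset α) :
    ∃ l : List α, l.Nodup ∧ (∀ a, a ∈ l ↔ a ∈ s) ∧ l.Pairwise (fun a b => ¬ r b a) := by
  classical
  have : IsPartialOrder α (ReflGen r) :=
    { antisymm := fun a b hab hba => by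
        cases hab with
        | refl => rfl
        | single hab =>
          cases hba with
          | refl => rfl
          | single hba => exact absurd (_root_.trans hab hba) (irrefl a) }
  obtain ⟨t, _, hle⟩ := extend_partialOrder (ReflGen r)
  refine ⟨s.sort t, s.sort_nodup t, fun _ => s.mem_sort t, ?_⟩
  refine ((s.pairwise_sort t).and (s.sort_nodup t)).imp fun ⟨hab, hne⟩ hba => hne ?_
  exact antisymm hab (hle _ _ (ReflGen.single hba))

/-- `r` together with edges from `p` to every element of `S`, closed transitively. -/
def prioritize {α : Type*} (r : α → α → Prop) (p : α) (S : Set α) (a b : α) : Prop :=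
  r a b ∨ (ReflGen r a p ∧ ∃ q ∈ S, ReflGen r q b)

section prioritize

variable {α : Type*} {r : α → α → Prop} {p : α} {S : Set α}

theorem isStrictOrder_prioritize [IsStrictOrder α r] (hS : ∀ q ∈ S, ¬ ReflGen r q p) :
    IsStrictOrder α (prioritize r p S) where
  irrefl a := by
    rintro (haa | ⟨hap, q, hq, hqa⟩)
    · exact irrefl a haa
    · exact hS q hq (_root_.trans hqa hap)
  trans a b c := by
    rintro (hab | ⟨hap, q, hq, hqb⟩) (hbc | ⟨hbp, q', hq', hq'c⟩)
    · exact Or.inl (_root_.trans hab hbc)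
    · exact Or.inr ⟨_root_.trans (ReflGen.single hab) hbp, q', hq', hq'c⟩
    · exact Or.inr ⟨hap, q, hq, _root_.trans hqb (ReflGen.single hbc)⟩
    · exact Or.inr ⟨hap, q', hq', hq'c⟩

theorem notMem_of_pairwise_prioritize {u₁ u₂ : List α}
    (hl : (u₁ ++ p :: u₂).Pairwise (fun a b => ¬ prioritize r p S b a)) {q : α} (hq : q ∈ u₁) :
    q ∉ S := fun hqS =>
  (List.pairwise_append.1 hl).2.2 q hq p List.mem_cons_self
    (Or.inr ⟨ReflGen.refl, q, hqS, ReflGen.refl⟩)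

end prioritize

namespace QHistory

instance isStrictOrder_hb (h : QHistory) : IsStrictOrder QOp h.hb where
  irrefl := h.hb_irrefl
  trans := h.hb_trans

noncomputable def erase (h : QHistory) (a : QOp) : QHistory :=
  { h with ops := h.ops.erase a }

theorem linearizes_cons {h : QHistory} {a : QOp} {l : List QOp} (ha : a ∈ h.ops)
    (hmin : ∀ o ∈ h.ops, ¬ h.hb o a) (hl : (h.erase a).Linearizes l) :
    h.Linearizes (a :: l) := by
  obtain ⟨hnd, hmem, hpw⟩ := hl
  have hmem' : ∀ o, o ∈ l ↔ o ≠ a ∧ o ∈ h.ops := fun o => (hmem o).trans Finset.mem_erase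
  refine ⟨List.nodup_cons.2 ⟨fun hal => ((hmem' a).1 hal).1 rfl, hnd⟩, fun o => ?_,
    List.pairwise_cons.2 ⟨fun o ho => hmin o ((hmem' o).1 ho).2, hpw⟩⟩
  by_cases hoa : o = a
  · simp [hoa, ha]
  · simp [hoa, hmem']

end QHistory

theorem queue_enqdeq_compatible_general (h : QHistory)
    (x : ℕ) (henq : QOp.enq x ∈ h.ops) (hdeq : QOp.deq x ∈ h.ops)
    (hEnqMin : ∀ o ∈ h.ops, ¬ h.hb o (QOp.enq x))
    (hDeqMin : ∀ d, d ≠ x → QOp.deq d ∈ h.ops → ¬ h.hb (QOp.deq d) (QOp.deq x)) :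
    LinearizableSet h (MatchEnqDeqW x) := by
  set S : Set QOp := {o | o ∈ h.ops ∧ ∃ d, d ≠ x ∧ o = QOp.deq d}
  have : IsStrictOrder QOp (prioritize h.hb (QOp.deq x) S) := by
    refine isStrictOrder_prioritize ?_
    rintro _ ⟨hdops, d, hdx, rfl⟩ (_ | hd)
    exacts [hdx rfl, hDeqMin d hdx hdops hd]
  obtain ⟨l, hnd, hmem, hpw⟩ :=
    Finset.exists_nodup_pairwise_not_rel (prioritize h.hb (QOp.deq x) S) (h.ops.erase (QOp.enq x))
  have hl : (h.erase (QOp.enq x)).Linearizes l := ⟨hnd, hmem, hpw.imp fun hR hb => hR (Or.inl hb)⟩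
  obtain ⟨u₁, u₂, rfl⟩ := List.append_of_mem ((hmem _).2 (Finset.mem_erase.2 ⟨by simp, hdeq⟩))
  refine ⟨_, ⟨u₁, u₂, rfl, fun d hd => ?_⟩, QHistory.linearizes_cons henq hEnqMin hl⟩
  have hdx : d ≠ x := by
    rintro rfl
    exact (List.nodup_append.1 hnd).2.2 _ hd _ List.mem_cons_self rfl
  have hdops : QOp.deq d ∈ h.ops := Finset.mem_of_mem_erase ((hmem _).1 (by simp [hd]))
  exact notMem_of_pairwise_prioritize hpw hd ⟨hdops, d, hdx, rfl⟩

/-- if some value `x` has its enqueue minimal (it happens-after no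
operation), its dequeue exists and does not happen-after `Enq(x)`, and its
dequeue happens-after no other dequeue, then `h` is linearizable with respect
to the words `Enq(x) · u1 · Deq(x) · u2` with no dequeue in `u1`. -/
theorem queue_enqdeq_compatible (h : QHistory)
    (hnoE : ∀ i, QOp.deqEmpty i ∉ h.ops)
    (x : ℕ) (henq : QOp.enq x ∈ h.ops) (hdeq : QOp.deq x ∈ h.ops)
    (hEnqMin : ∀ o ∈ h.ops, ¬ h.hb o (QOp.enq x))
    (hDeqNotAfterEnq : ¬ h.hb (QOp.enq x) (QOp.deq x))
    (hDeqMin : ∀ d, d ≠ x → QOp.deq d ∈ h.ops → ¬ h.hb (QOp.deq d) (QOp.deq x)) :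
    LinearizableSet h (MatchEnqDeqW x) :=
  queue_enqdeq_compatible_general h x henq hdeq hEnqMin hDeqMin
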